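/- Let (M, d) be a metric space, γ a line in M, and x ∈ M with b_{γ⁺}(x) + b_{γ⁻}(x) = 0. Let r₊ and r₋ be rays with r₊(0) = r₋(0) = x such that b_{γ⁺}(r₊(t)) = b_{γ⁺}(x) − t and b_{γ⁻}(r₋(t)) = b_{γ⁻}(x) − t for all t ≥ 0, and let γ′ : ℝ → M be defined by γ′(t) = r₊(t) for t ≥ 0 and γ′(t) = r₋(−t) for t ≤ 0. Then for all t ∈ ℝ one has b_{γ⁺}(γ′(t)) = b_{γ⁺}(x) − t and b_{γ⁻}(γ′(t)) = b_{γ⁻}(x) + t; in particular B_γ(γ′(t)) = 0 for all t ∈ ℝ, that is, γ′ ≺ γ. -/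
import Mathlib


open Filter Topology

variable {M : Type*} [MetricSpace M]

/-- A ray in a metric space: a map `γ` defined (in effect) on `[0, ∞)` with
`d(γ s, γ t) = |s - t|` for all `s, t ≥ 0`. -/
def IsRay (γ : ℝ → M) : Prop :=
  ∀ s t : ℝ, 0 ≤ s → 0 ≤ t → dist (γ s) (γ t) = |s - t|

/-- A line in a metric space: a map `γ : ℝ → M` with `d(γ s, γ t) = |s - t|`. -/
def IsLine (γ : ℝ → M) : Prop :=
  ∀ s t : ℝ, dist (γ s) (γ t) = |s - t|

/-- The Busemann function of a ray `γ`: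
`b_γ(x) = lim_{t → ∞} (d(x, γ t) - t)`, which exists and equals the infimum
since `t ↦ d(x, γ t) - t` is nonincreasing on `[0, ∞)` and bounded below. -/
noncomputable def busemann (γ : ℝ → M) (x : M) : ℝ :=
  ⨅ t : Set.Ici (0 : ℝ), (dist x (γ t) - (t : ℝ))

/-- For a line `γ`, the negative ray `γ⁻(t) = γ(-t)`.  (The positive ray `γ⁺`
is just `γ` itself, restricted to `[0, ∞)`.) -/
def negRay (γ : ℝ → M) : ℝ → M := fun t => γ (-t)

/-- The barrier function of a line `γ`: `B_γ = b_{γ⁺} + b_{γ⁻}`. -/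
noncomputable def barrier (γ : ℝ → M) (x : M) : ℝ :=
  busemann γ x + busemann (negRay γ) x

/-- `γ' ≺ γ`: the barrier of `γ` vanishes at `γ' 0` and both Busemann functions
`b_{γ⁺}`, `b_{γ⁻}` calibrate `γ'` (every forward translate of `γ'` is a coray to
`γ⁺` and every backward translate is a coray to `γ⁻`). -/
def Prec (γ' γ : ℝ → M) : Prop :=
  busemann γ (γ' 0) + busemann (negRay γ) (γ' 0) = 0 ∧
  ∀ t : ℝ, busemann γ (γ' t) = busemann γ (γ' 0) - t ∧
    busemann (negRay γ) (γ' t) = busemann (negRay γ) (γ' 0) + t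

/-- A geodesic metric space: any two points are joined by a minimizing geodesic
segment. -/
def IsGeodesicSpace (M : Type*) [MetricSpace M] : Prop :=
  ∀ x y : M, ∃ σ : ℝ → M, σ 0 = x ∧ σ (dist x y) = y ∧
    ∀ s t : ℝ, s ∈ Set.Icc 0 (dist x y) → t ∈ Set.Icc 0 (dist x y) →
      dist (σ s) (σ t) = |s - t|

/-- `γ'` is a coray to the ray `γ`: there are `tᵢ → ∞`, points `xᵢ → γ' 0` and
minimal geodesic segments `cᵢ` from `xᵢ` to `γ (tᵢ)` of length `Tᵢ = d(xᵢ, γ tᵢ) → ∞`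
converging to `γ'` uniformly on compact subintervals of `[0, ∞)`. -/
def IsCoray (γ' γ : ℝ → M) : Prop :=
  ∃ (t : ℕ → ℝ) (x : ℕ → M) (c : ℕ → ℝ → M),
    (∀ i, 0 ≤ t i) ∧
    Tendsto t atTop atTop ∧
    Tendsto x atTop (𝓝 (γ' 0)) ∧
    (∀ i, c i 0 = x i) ∧
    (∀ i, c i (dist (x i) (γ (t i))) = γ (t i)) ∧
    (∀ i, ∀ s s' : ℝ, s ∈ Set.Icc 0 (dist (x i) (γ (t i))) →
      s' ∈ Set.Icc 0 (dist (x i) (γ (t i))) → dist (c i s) (c i s') = |s - s'|) ∧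
    Tendsto (fun i => dist (x i) (γ (t i))) atTop atTop ∧
    (∀ K > (0 : ℝ), ∀ ε > (0 : ℝ), ∃ N : ℕ, ∀ i ≥ N,
      ∀ s ∈ Set.Icc (0 : ℝ) K, dist (c i s) (γ' s) < ε)

/-- The line `γ` has the uniqueness property: through each point of the zero set
of `B_γ` there is at most one line `γ''` with `γ'' ≺ γ`. -/
def HasUniqueCalibLine (γ : ℝ → M) : Prop :=
  ∀ x : M, barrier γ x = 0 →
    ∀ γ₁ γ₂ : ℝ → M, IsLine γ₁ → IsLine γ₂ → γ₁ 0 = x → γ₂ 0 = x →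
      Prec γ₁ γ → Prec γ₂ γ → γ₁ = γ₂

instance : Nonempty (Set.Ici (0:ℝ)) := ⟨⟨0, Set.self_mem_Ici⟩⟩

lemma busemann_bddBelow (γ : ℝ → M) (hγ : IsRay γ) (x : M) :
    BddBelow (Set.range fun t : Set.Ici (0:ℝ) => dist x (γ t) - (t : ℝ)) := by
  refine ⟨-(dist x (γ 0)), ?_⟩
  rintro _ ⟨⟨t, ht⟩, rfl⟩
  replace ht : (0:ℝ) ≤ t := ht
  have h := hγ 0 t le_rfl ht
  have htri := dist_triangle (γ 0) x (γ t)
  rw [h, abs_of_nonpos (by linarith), dist_comm (γ 0) x] at htri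
  replace ht : (0:ℝ) ≤ t := ht
  simp only
  linarith

lemma busemann_le_dist_sub (γ : ℝ → M) (hγ : IsRay γ) (x : M) {t : ℝ} (ht : 0 ≤ t) :
    busemann γ x ≤ dist x (γ t) - t :=
  ciInf_le (busemann_bddBelow γ hγ x) ⟨t, ht⟩

lemma le_busemann (γ : ℝ → M) (x : M) {c : ℝ} (h : ∀ t : ℝ, 0 ≤ t → c ≤ dist x (γ t) - t) :
    c ≤ busemann γ x :=
  le_ciInf fun ⟨t, ht⟩ => h t ht

lemma busemann_lip (γ : ℝ → M) (hγ : IsRay γ) (x y : M) :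
    busemann γ x ≤ busemann γ y + dist x y := by
  have h : busemann γ x - dist x y ≤ busemann γ y := by
    refine le_busemann γ y fun t ht => ?_
    have h1 := busemann_le_dist_sub γ hγ x ht
    have h2 := dist_triangle x y (γ t)
    linarith
  linarith

lemma line_isRay (γ : ℝ → M) (hγ : IsLine γ) : IsRay γ := fun s t _ _ => hγ s t

lemma negRay_isRay (γ : ℝ → M) (hγ : IsLine γ) : IsRay (negRay γ) := by
  intro s t _ _
  show dist (γ (-s)) (γ (-t)) = |s - t|
  rw [hγ (-s) (-t), neg_sub_neg, abs_sub_comm]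

lemma barrier_nonneg (γ : ℝ → M) (hγ : IsLine γ) (x : M) :
    0 ≤ busemann γ x + busemann (negRay γ) x := by
  have h : -busemann γ x ≤ busemann (negRay γ) x := by
    refine le_busemann _ x fun s hs => ?_
    have h2 : s - dist x (γ (-s)) ≤ busemann γ x := by
      refine le_busemann γ x fun t ht => ?_
      have htri := dist_triangle (γ (-s)) x (γ t)
      have hd : dist (γ (-s)) (γ t) = |(-s) - t| := hγ (-s) t
      rw [abs_of_nonpos (by linarith)] at hd
      rw [dist_comm (γ (-s)) x] at htri
      linarith
    show -busemann γ x ≤ dist x (γ (-s)) - s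
    linarith
  linarith

/-- along the concatenation `γ'` of two calibrated rays issued from a
point of the zero set of the barrier of the line `γ`, both Busemann functions stay
calibrated, the barrier vanishes identically, and `γ' ≺ γ`. -/
theorem concat_of_calibrated_rays_prec (γ : ℝ → M) (hγ : IsLine γ) (x : M)
    (hx : busemann γ x + busemann (negRay γ) x = 0)
    (rp rm : ℝ → M) (hrp : IsRay rp) (hrm : IsRay rm)
    (h0p : rp 0 = x) (h0m : rm 0 = x)
    (hcalp : ∀ t : ℝ, 0 ≤ t → busemann γ (rp t) = busemann γ x - t)
    (hcalm : ∀ t : ℝ, 0 ≤ t → busemann (negRay γ) (rm t) = busemann (negRay γ) x - t)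
    (γ' : ℝ → M) (hγ' : ∀ t : ℝ, γ' t = if 0 ≤ t then rp t else rm (-t)) :
    (∀ t : ℝ, busemann γ (γ' t) = busemann γ x - t ∧
      busemann (negRay γ) (γ' t) = busemann (negRay γ) x + t) ∧
    (∀ t : ℝ, barrier γ (γ' t) = 0) ∧
    Prec γ' γ := by
  have hRp := line_isRay γ hγ
  have hRm := negRay_isRay γ hγ
  have keyp : ∀ t : ℝ, 0 ≤ t → busemann (negRay γ) (rp t) = busemann (negRay γ) x + t := by
    intro t ht
    have hd : dist (rp t) x = t := by
      rw [← h0p, hrp t 0 ht le_rfl, sub_zero, abs_of_nonneg ht]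
    have hle := busemann_lip (negRay γ) hRm (rp t) x
    have h1 := barrier_nonneg γ hγ (rp t)
    have h2 := hcalp t ht
    linarith
  have keym : ∀ t : ℝ, 0 ≤ t → busemann γ (rm t) = busemann γ x + t := by
    intro t ht
    have hd : dist (rm t) x = t := by
      rw [← h0m, hrm t 0 ht le_rfl, sub_zero, abs_of_nonneg ht]
    have hle := busemann_lip γ hRp (rm t) x
    have h1 := barrier_nonneg γ hγ (rm t)
    have h2 := hcalm t ht
    linarith
  have main : ∀ t : ℝ, busemann γ (γ' t) = busemann γ x - t ∧
      busemann (negRay γ) (γ' t) = busemann (negRay γ) x + t := by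
    intro t
    rw [hγ' t]
    by_cases ht : 0 ≤ t
    · rw [if_pos ht]
      exact ⟨hcalp t ht, keyp t ht⟩
    · rw [if_neg ht]
      have ht' : 0 ≤ -t := by linarith
      constructor
      · rw [keym (-t) ht']; ring
      · rw [hcalm (-t) ht']; ring
  have h0 : γ' 0 = x := by rw [hγ' 0, if_pos le_rfl, h0p]
  refine ⟨main, ?_, ?_⟩
  · intro t
    have h := main t
    unfold barrier
    linarith [h.1, h.2]
  · refine ⟨by rw [h0]; exact hx, fun t => ?_⟩
    rw [h0]
    exact ⟨(main t).1, (main t).2⟩
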